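/- Let K ≥ 0, d ≥ 0, and let μ₁, μ₂ be vectors in a real inner product space E with ‖μ₁‖² ≤ 2K and ‖μ₂‖² ≤ 2(K + d), and suppose d ≤ 2 + 2√(2K + 1). Then d ≤ √(4(2K + d)), and for any 1-Lipschitz f : E → ℝ and any probability measure ν on E such that e ↦ f(μ₁+e) and e ↦ f(μ₂+e) are ν-integrable, one has ∫ f(μ₂+e) dν(e) − ∫ f(μ₁+e) dν(e) − d ≤ √(4(2K+d)) − d, where √(4(2K+d)) − d ≥ 0; thus the quantity ∫ f(μ₂+e) dν − ∫ f(μ₁+e) dν − d (the ELBO difference 𝓛_cvae − 𝓛_vae) is bounded above by the nonnegative value √(4(2K+d)) − d. -/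
import Mathlib


open MeasureTheory

/-- Combining Theorem 1 with the ELBO comparison (Eqs. 12–17): under the posterior-mean bounds
and the set-point guideline `d ≤ 2 + 2√(2K + 1)`, the ELBO difference
`∫ f(μ₂+e) dν − ∫ f(μ₁+e) dν − d` is bounded above by `√(4(2K+d)) − d`, and this upper
bound is nonnegative. -/
theorem controlVAE_elbo_difference_bound
    {E : Type*} [NormedAddCommGroup E] [InnerProductSpace ℝ E] [MeasurableSpace E]
    (K d : ℝ) (hK : 0 ≤ K) (hd : 0 ≤ d)
    (μ₁ μ₂ : E) (h₁ : ‖μ₁‖ ^ 2 ≤ 2 * K) (h₂ : ‖μ₂‖ ^ 2 ≤ 2 * (K + d))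
    (hrange : d ≤ 2 + 2 * Real.sqrt (2 * K + 1))
    (f : E → ℝ) (hf : LipschitzWith 1 f)
    (ν : Measure E) [IsProbabilityMeasure ν]
    (hint₁ : Integrable (fun e => f (μ₁ + e)) ν)
    (hint₂ : Integrable (fun e => f (μ₂ + e)) ν) :
    ((∫ e, f (μ₂ + e) ∂ν) - (∫ e, f (μ₁ + e) ∂ν) - d ≤ Real.sqrt (4 * (2 * K + d)) - d)
      ∧ 0 ≤ Real.sqrt (4 * (2 * K + d)) - d := by
  have hC : 0 ≤ 4 * (2 * K + d) := by linarith
  set C := Real.sqrt (4 * (2 * K + d)) with hCdef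
  have hC0 : 0 ≤ C := Real.sqrt_nonneg _
  constructor
  · -- pointwise bound
    have hdiff : ‖μ₂ - μ₁‖ ≤ C := by
      have h1 : ‖μ₁‖ ≤ Real.sqrt (2 * K) := by
        rw [← Real.sqrt_sq (norm_nonneg μ₁)]
        exact Real.sqrt_le_sqrt (by simpa [sq] using h₁)
      have h2 : ‖μ₂‖ ≤ Real.sqrt (2 * (K + d)) := by
        rw [← Real.sqrt_sq (norm_nonneg μ₂)]
        exact Real.sqrt_le_sqrt (by simpa [sq] using h₂)
      have htri : ‖μ₂ - μ₁‖ ≤ ‖μ₂‖ + ‖μ₁‖ := norm_sub_le _ _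
      have hsum : Real.sqrt (2 * (K + d)) + Real.sqrt (2 * K) ≤ C := by
        rw [← Real.sqrt_sq (by positivity : (0:ℝ) ≤ Real.sqrt (2 * (K + d)) + Real.sqrt (2 * K))]
        apply Real.sqrt_le_sqrt
        have e1 : Real.sqrt (2 * (K + d)) ^ 2 = 2 * (K + d) := Real.sq_sqrt (by linarith)
        have e2 : Real.sqrt (2 * K) ^ 2 = 2 * K := Real.sq_sqrt (by linarith)
        have hprod : Real.sqrt (2 * (K + d)) * Real.sqrt (2 * K)
            ≤ (Real.sqrt (2 * (K + d)) ^ 2 + Real.sqrt (2 * K) ^ 2) / 2 := by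
          nlinarith [sq_nonneg (Real.sqrt (2 * (K + d)) - Real.sqrt (2 * K))]
        nlinarith
      linarith
    have hpt : ∀ e, f (μ₂ + e) - f (μ₁ + e) ≤ C := by
      intro e
      have := hf.dist_le_mul (μ₂ + e) (μ₁ + e)
      rw [dist_eq_norm] at this
      have hle : |f (μ₂ + e) - f (μ₁ + e)| ≤ ‖μ₂ + e - (μ₁ + e)‖ := by
        simpa [Real.dist_eq, dist_eq_norm] using this
      have : ‖μ₂ + e - (μ₁ + e)‖ = ‖μ₂ - μ₁‖ := by congr 1; abel
      rw [this] at hle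
      have := abs_le.mp hle
      linarith [this.2, hdiff]
    have hint : (∫ e, (f (μ₂ + e) - f (μ₁ + e)) ∂ν) ≤ ∫ _, C ∂ν := by
      apply integral_mono (hint₂.sub hint₁) (integrable_const C)
      intro e; exact hpt e
    rw [integral_sub hint₂ hint₁, integral_const] at hint
    simp at hint
    linarith
  · -- d ≤ C
    have hs : Real.sqrt (2 * K + 1) ^ 2 = 2 * K + 1 := Real.sq_sqrt (by linarith)
    set s := Real.sqrt (2 * K + 1) with hsdef
    have hs0 : 0 ≤ s := Real.sqrt_nonneg _
    have hs1 : 1 ≤ s := by nlinarith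
    have key : (d - (2 - 2 * s)) * (d - (2 + 2 * s)) ≤ 0 :=
      mul_nonpos_of_nonneg_of_nonpos (by linarith) (by linarith)
    have hd2 : d ^ 2 ≤ 4 * (2 * K + d) := by nlinarith
    have : d ≤ C := by
      rw [hCdef]
      exact (Real.le_sqrt hd (by linarith)).mpr hd2
    linarith
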